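/- Let ℵ be a cardinal, A a general metric space and M a left module on A such that (i) ⨅_{x ∈ A} M x = 0, (ii) for every index type ι with #ι < ℵ and every family (N_i) of right modules, ⨅_x (M x + ⨆_i N_i x) = ⨆_i ⨅_x (M x + N_i x), and (iii) for every v ∈ ℝ≥0∞ and every right module N, ⨅_x (M x + (N x - v)) = (⨅_x (M x + N x)) - v. Then the filter F(M) generated by the sets {x ∈ A | M x ≤ ε} for ε > 0 is a proper filter of type ℵ. -/

import Mathlib

open ENNReal Filter

universe u

/-- A proper filter `F` has type `ℵ` (for a cardinal `c`) when for every `ε > 0`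
there is `s ∈ F` such that every family of fewer than `c` elements of `s` is
`ε`-dominated by some point of every `t ∈ F`. -/
def HasTypeAleph {A : Type u} (d : A → A → ℝ≥0∞) (c : Cardinal.{u}) (F : Filter A) : Prop :=
  F.NeBot ∧
  ∀ ε : ℝ≥0∞, 0 < ε → ∃ s ∈ F, ∀ (ι : Type u) (x : ι → A), Cardinal.mk ι < c →
    (∀ i, x i ∈ s) → ∀ t ∈ F, ∃ y ∈ t, ∀ i, d (x i) y ≤ ε

/-- The filter `F(M)` generated by the sets `{x | M x ≤ ε}` for `ε > 0`. -/
noncomputable def filterOf {A : Type u} (M : A → ℝ≥0∞) : Filter A :=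
  ⨅ (ε : ℝ≥0∞) (_ : 0 < ε), Filter.principal {x | M x ≤ ε}

/-- If `M` is a `𝒫_ℵ`-flat left module (i.e. `- * M` preserves the terminal object,
conical `ℵ`-limits and cotensors), then `F(M)` is a proper filter of type `ℵ`. -/
theorem filterOf_hasTypeAleph {A : Type u} (d : A → A → ℝ≥0∞)
    (hrefl : ∀ x, d x x = 0)
    (htri : ∀ x y z, d x z ≤ d y z + d x y)
    (c : Cardinal.{u})
    (M : A → ℝ≥0∞) (hM : ∀ x y, M x ≤ M y + d x y)
    (hterm : (⨅ x, M x) = 0)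
    (hconical : ∀ (ι : Type u), Cardinal.mk ι < c → ∀ N : ι → A → ℝ≥0∞,
      (∀ i, ∀ x y, N i y ≤ d x y + N i x) →
      (⨅ x, (M x + ⨆ i, N i x)) = ⨆ i, ⨅ x, (M x + N i x))
    (hcot : ∀ (v : ℝ≥0∞) (N : A → ℝ≥0∞), (∀ x y, N y ≤ d x y + N x) →
      (⨅ x, (M x + (N x - v))) = (⨅ x, (M x + N x)) - v) :
    HasTypeAleph d c (filterOf M) := by
  have hbasis : (filterOf M).HasBasis (fun ε : ℝ≥0∞ => 0 < ε) (fun ε => {x | M x ≤ ε}) := by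
    unfold filterOf
    refine Filter.hasBasis_biInf_principal (S := {ε : ℝ≥0∞ | 0 < ε}) ?_ ⟨1, (show (0:ℝ≥0∞) < 1 from zero_lt_one)⟩
    rintro ε hε ε' hε'
    refine ⟨min ε ε', (show (0:ℝ≥0∞) < min ε ε' from lt_min hε hε'), ?_, ?_⟩
    · intro x hx
      exact le_trans hx (min_le_left ε ε')
    · intro x hx
      exact le_trans hx (min_le_right ε ε')
  have hne : ∀ ε : ℝ≥0∞, 0 < ε → ∃ x, M x < ε := by
    intro ε hε
    exact iInf_lt_iff.mp (hterm ▸ hε : (⨅ x, M x) < ε)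
  refine ⟨hbasis.neBot_iff.mpr ?_, ?_⟩
  · intro ε hε
    obtain ⟨x, hx⟩ := hne ε hε
    exact ⟨x, hx.le⟩
  · intro ε hε
    set ε₀ := min ε 1 with hε₀def
    have hε₀pos : 0 < ε₀ := lt_min hε one_pos
    have hhalf : 0 < ε₀ / 2 := ENNReal.half_pos hε₀pos.ne'
    refine ⟨{x | M x ≤ ε₀ / 2}, hbasis.mem_of_mem hhalf, ?_⟩
    intro ι x hι hxs t ht
    obtain ⟨δ, hδ, hδt⟩ := hbasis.mem_iff.mp ht
    set N : A → ℝ≥0∞ := fun z => ⨆ i, d (x i) z with hN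
    have hNmod : ∀ a b, N b ≤ d a b + N a := by
      intro a b
      refine iSup_le fun i => (htri (x i) a b).trans ?_
      exact add_le_add_right (le_iSup (fun i => d (x i) a) i) _
    have hI : (⨅ z, (M z + N z)) ≤ ε₀ / 2 := by
      rw [hN, hconical ι hι (fun i z => d (x i) z) (fun i a b => htri (x i) a b)]
      refine iSup_le fun i => ?_
      calc ⨅ z, (M z + d (x i) z) ≤ M (x i) + d (x i) (x i) := iInf_le _ (x i)
        _ = M (x i) := by rw [hrefl, add_zero]
        _ ≤ ε₀ / 2 := hxs i
    have h0 : (⨅ z, (M z + (N z - ε₀ / 2))) = 0 := by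
      rw [hcot (ε₀ / 2) N hNmod]
      exact tsub_eq_zero_of_le hI
    have hδ' : 0 < min δ (ε₀ / 2) := lt_min hδ hhalf
    have hlt : (⨅ z, (M z + (N z - ε₀ / 2))) < min δ (ε₀ / 2) := h0 ▸ hδ'
    obtain ⟨y, hy⟩ := iInf_lt_iff.mp hlt
    refine ⟨y, hδt ?_, fun i => ?_⟩
    · exact le_trans (le_trans (le_add_right le_rfl) hy.le) (min_le_left _ _)
    · have h1 : N y - ε₀ / 2 ≤ ε₀ / 2 :=
        le_trans (le_add_left le_rfl) (hy.le.trans (min_le_right _ _))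
      have h2 : N y ≤ ε₀ := by
        calc N y ≤ ε₀ / 2 + ε₀ / 2 := tsub_le_iff_right.mp h1
          _ = ε₀ := ENNReal.add_halves _
      exact le_trans (le_iSup (fun i => d (x i) y) i) (h2.trans (min_le_left _ _))
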